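/- Let x : ℕ → ℂ be the alternating sequence x_n = (−1)^n, so that sup_{n≥0} |∑_{k=0}^{n} x_k| ≤ 1 and G_x(λ) = 1/(λ + 1) for |λ| > 1. Then there exists no F ∈ L¹_loc(𝕋∖{1}; ℂ) which is a boundary function for G_x, and x_n does not tend to 0. (In particular, the boundary-function hypothesis cannot be dropped from the quantified Tauberian theorem.) -/

import Mathlib

open MeasureTheory Filter Set

/-- `Gx x` is the holomorphic function on `{λ : |λ| > 1}` given by
`Gx x λ = ∑_{n ≥ 0} x n / λ^(n+1)`. -/
noncomputable def Gx {X : Type*} [NormedAddCommGroup X] [NormedSpace ℂ X] (x : ℕ → X)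
    (lam : ℂ) : X :=
  ∑' n : ℕ, (lam ^ (n + 1))⁻¹ • x n

/-- `ψ ∈ C₀(−π,π)`: continuous on `[−π,π]`, vanishing in a neighbourhood of `0`,
with `ψ(−π) = ψ(π)`. -/
def IsC0 (ψ : ℝ → ℂ) : Prop :=
  ContinuousOn ψ (Set.Icc (-Real.pi) Real.pi) ∧
    (∃ δ > 0, ∀ θ : ℝ, |θ| < δ → ψ θ = 0) ∧ ψ (-Real.pi) = ψ Real.pi

/-- `F ∈ L¹_loc(𝕋∖{1}; X)`: for every `ψ ∈ C₀(−π,π)` the map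
`θ ↦ ψ(θ) • F(e^{iθ})` is integrable on `(−π, π)`. -/
def MemL1loc {X : Type*} [NormedAddCommGroup X] [NormedSpace ℂ X] (F : ℂ → X) : Prop :=
  ∀ ψ : ℝ → ℂ, IsC0 ψ →
    IntervalIntegrable (fun θ : ℝ => ψ θ • F (Complex.exp (Complex.I * θ)))
      MeasureTheory.volume (-Real.pi) Real.pi

/-- `F` is a boundary function for `Gx x`:
`lim_{r→1+} ∫_{−π}^{π} ψ(θ) Gx x (r e^{iθ}) dθ = ∫_{−π}^{π} ψ(θ) F(e^{iθ}) dθ`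
for every `ψ ∈ C₀(−π,π)`. -/
def IsBoundaryFun {X : Type*} [NormedAddCommGroup X] [NormedSpace ℂ X] [CompleteSpace X]
    (x : ℕ → X) (F : ℂ → X) : Prop :=
  ∀ ψ : ℝ → ℂ, IsC0 ψ →
    Filter.Tendsto
      (fun r : ℝ =>
        ∫ θ in (-Real.pi)..Real.pi, ψ θ • Gx x ((r : ℂ) * Complex.exp (Complex.I * θ)))
      (nhdsWithin 1 (Set.Ioi 1))
      (nhds (∫ θ in (-Real.pi)..Real.pi, ψ θ • F (Complex.exp (Complex.I * θ))))

/-! For `‖λ‖ > 1` the series sums to `1 / (λ + 1)`, whose only singularity on the unit circle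
is the simple pole at `λ = -1`. The test function `ψ(θ) = g(π - θ)`, with
`g(t) = (1 - t) / (1 - log t)` on `(0, 1)`, is continuous and vanishes at `θ = ±π`, but so slowly
that `g(t) / t` is not integrable at `0`. Since `-Im (1 / (r e^{i(π - t)} + 1))` is of size `1 / t`
on `r - 1 ≤ t`, the imaginary parts of `∫ ψ(θ) G(r e^{iθ}) dθ` tend to `-∞` as `r → 1⁺`, whereas a
boundary function would make these integrals converge. -/

open Topology Real

theorem Gx_geometric {c lam : ℂ} (h : ‖c‖ < ‖lam‖) :
    Gx (fun n : ℕ => c ^ n) lam = (lam - c)⁻¹ := by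
  have hlam : lam ≠ 0 := norm_pos_iff.1 ((norm_nonneg c).trans_lt h)
  have hratio : ‖c / lam‖ < 1 := by
    rwa [norm_div, div_lt_one (norm_pos_iff.2 hlam)]
  have hterm : ∀ n : ℕ, (lam ^ (n + 1))⁻¹ • c ^ n = (c / lam) ^ n * lam⁻¹ := fun n => by
    rw [smul_eq_mul, div_pow, pow_succ]
    field_simp
  rw [Gx, tsum_congr hterm, tsum_mul_right, tsum_geometric_of_norm_lt_one hratio, ← mul_inv,
    sub_mul, div_mul_cancel₀ c hlam, one_mul]

noncomputable def logCutoff (t : ℝ) : ℝ :=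
  if 0 < t ∧ t < 1 then (1 - t) / (1 - log t) else 0

theorem logCutoff_of_mem_Ioo {t : ℝ} (h : t ∈ Ioo 0 1) :
    logCutoff t = (1 - t) / (1 - log t) :=
  if_pos h

theorem logCutoff_of_notMem_Ioo {t : ℝ} (h : t ∉ Ioo 0 1) : logCutoff t = 0 :=
  if_neg h

theorem logCutoff_nonneg (t : ℝ) : 0 ≤ logCutoff t := by
  by_cases ht : t ∈ Ioo 0 1
  · rw [logCutoff_of_mem_Ioo ht]
    have := log_neg ht.1 ht.2
    exact div_nonneg (by linarith [ht.2]) (by linarith)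
  · rw [logCutoff_of_notMem_Ioo ht]

theorem inv_two_mul_one_sub_log_le_logCutoff {t : ℝ} (h0 : 0 < t) (h : t ≤ 1 / 2) :
    (2 * (1 - log t))⁻¹ ≤ logCutoff t := by
  have hlog := log_neg h0 (by linarith)
  rw [logCutoff_of_mem_Ioo ⟨h0, by linarith⟩, inv_eq_one_div,
    div_le_div_iff₀ (by linarith) (by linarith)]
  nlinarith

theorem continuousOn_one_sub_div_one_sub_log :
    ContinuousOn (fun t : ℝ => (1 - t) / (1 - log t)) (Ioc 0 1) := by
  refine (continuousOn_const.sub continuousOn_id).div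
    (continuousOn_const.sub (continuousOn_log.mono fun t ht => ht.1.ne')) fun t ht => ?_
  linarith [log_nonpos ht.1.le ht.2]

theorem tendsto_one_sub_div_one_sub_log_nhdsGT_zero :
    Tendsto (fun t : ℝ => (1 - t) / (1 - log t)) (𝓝[>] 0) (𝓝 0) := by
  have hnum : Tendsto (fun t : ℝ => 1 - t) (𝓝[>] 0) (𝓝 1) := by
    simpa using ((continuous_sub_left (1 : ℝ)).tendsto 0).mono_left nhdsWithin_le_nhds
  exact hnum.div_atTop (tendsto_atTop_add_const_left _ 1 (tendsto_neg_atBot_atTop.comp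
    tendsto_log_nhdsGT_zero) |>.congr fun t => by simp [sub_eq_add_neg])

theorem continuous_logCutoff : Continuous logCutoff := by
  have hfrontier : frontier {t : ℝ | 0 < t ∧ t < 1} = {0, 1} := frontier_Ioo zero_lt_one
  refine continuous_if' (fun a ha => ?_) (fun a ha => ?_)
    (continuousOn_one_sub_div_one_sub_log.mono Ioo_subset_Ioc_self) continuousOn_const
  · rw [hfrontier] at ha
    rcases ha with rfl | rfl
    · simpa using tendsto_one_sub_div_one_sub_log_nhdsGT_zero.mono_left
        (nhdsWithin_mono _ fun t ht => ht.1)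
    · convert (continuousOn_one_sub_div_one_sub_log 1 ⟨zero_lt_one, le_rfl⟩).mono_left
        (nhdsWithin_mono _ Ioo_subset_Ioc_self) using 2
      · rfl
      · simp
  · rw [hfrontier] at ha
    rcases ha with rfl | rfl <;> simpa using tendsto_const_nhds

noncomputable def cutoffTest (θ : ℝ) : ℂ := logCutoff (π - θ)

theorem continuous_cutoffTest : Continuous cutoffTest :=
  Complex.continuous_ofReal.comp (continuous_logCutoff.comp (continuous_sub_left π))

theorem isC0_cutoffTest : IsC0 cutoffTest := by
  have hπ := pi_gt_three
  have hzero : ∀ θ ≤ π - 1, cutoffTest θ = 0 := fun θ hθ => by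
    rw [cutoffTest, logCutoff_of_notMem_Ioo fun h => by linarith [h.2], Complex.ofReal_zero]
  refine ⟨continuous_cutoffTest.continuousOn,
    ⟨1, one_pos, fun θ hθ => hzero θ (by linarith [(abs_lt.1 hθ).2])⟩, ?_⟩
  rw [hzero _ (by linarith), cutoffTest, sub_self, logCutoff_of_notMem_Ioo (by simp),
    Complex.ofReal_zero]

noncomputable def poleKernel (r t : ℝ) : ℝ := r * sin t / (r ^ 2 - 2 * r * cos t + 1)

theorem sq_sub_one_le_poleKernel_denom {r : ℝ} (hr : 0 ≤ r) (t : ℝ) :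
    (r - 1) ^ 2 ≤ r ^ 2 - 2 * r * cos t + 1 := by
  nlinarith [cos_le_one t]

theorem neg_im_inv_mul_exp_add_one (r θ : ℝ) :
    -(((r : ℂ) * Complex.exp (Complex.I * θ) + 1)⁻¹).im = poleKernel r (π - θ) := by
  have hexp : Complex.exp (Complex.I * θ) = Complex.exp (θ * Complex.I) := by rw [mul_comm]
  rw [poleKernel, sin_pi_sub, cos_pi_sub, Complex.inv_im, neg_div, neg_neg, Complex.normSq_apply]
  simp only [hexp, Complex.add_re, Complex.add_im, Complex.mul_re, Complex.mul_im,
    Complex.exp_ofReal_mul_I_re, Complex.exp_ofReal_mul_I_im, Complex.ofReal_re,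
    Complex.ofReal_im, Complex.one_re, Complex.one_im]
  congr 1
  · ring
  · nlinarith [sin_sq_add_cos_sq θ]

theorem logCutoff_mul_poleKernel_nonneg {r : ℝ} (hr : 0 ≤ r) (t : ℝ) :
    0 ≤ logCutoff t * poleKernel r t := by
  by_cases ht : t ∈ Ioo 0 1
  · have hsin : 0 < sin t := sin_pos_of_pos_of_lt_pi ht.1 (by linarith [ht.2, pi_gt_three])
    exact mul_nonneg (logCutoff_nonneg t)
      (div_nonneg (mul_nonneg hr hsin.le)
        ((sq_nonneg _).trans (sq_sub_one_le_poleKernel_denom hr t)))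
  · rw [logCutoff_of_notMem_Ioo ht, zero_mul]

theorem continuous_poleKernel {r : ℝ} (hr : 1 < r) : Continuous (poleKernel r) :=
  (continuous_const.mul continuous_sin).div (by fun_prop) fun t =>
    (lt_of_lt_of_le (by nlinarith) (sq_sub_one_le_poleKernel_denom (by linarith) t)).ne'

theorem inv_four_mul_le_poleKernel {r t : ℝ} (ht0 : 0 < t) (ht1 : t ≤ 1) (hr : 1 < r)
    (hrt : r ≤ 1 + t) : (4 * t)⁻¹ ≤ poleKernel r t := by
  have hsin : 3 / 4 * t ≤ sin t := by
    linarith [sin_gt_sub_cube ht0, pow_le_of_le_one ht0.le ht1 three_ne_zero]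
  have hnum : 3 * r * t ^ 2 ≤ r * sin t * (4 * t) := by
    nlinarith [mul_le_mul_of_nonneg_left hsin (by positivity : (0 : ℝ) ≤ 4 * r * t)]
  have hsq : (r - 1) ^ 2 ≤ t ^ 2 := pow_le_pow_left₀ (by linarith) (by linarith) 2
  have hcos : 2 * r * (1 - cos t) ≤ r * t ^ 2 := by
    nlinarith [one_sub_sq_div_two_le_cos (x := t)]
  have hdenom : 0 < r ^ 2 - 2 * r * cos t + 1 :=
    lt_of_lt_of_le (by nlinarith) (sq_sub_one_le_poleKernel_denom (by linarith) t)
  rw [poleKernel, inv_eq_one_div, div_le_div_iff₀ (by positivity) hdenom]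
  nlinarith

theorem hasDerivAt_log_one_sub_log {t : ℝ} (ht : 0 < t) (hlog : log t < 1) :
    HasDerivAt (fun t => log (1 - log t)) (-(t * (1 - log t))⁻¹) t :=
  (((hasDerivAt_log ht.ne').const_sub 1).log (by linarith)).congr_deriv <| by
    rw [neg_div, div_eq_mul_inv, mul_inv]

theorem tendsto_log_one_sub_log_nhdsGT_zero :
    Tendsto (fun a : ℝ => log (1 - log a)) (𝓝[>] 0) atTop :=
  tendsto_log_atTop.comp <| tendsto_atTop_add_const_left _ 1
    (tendsto_neg_atBot_atTop.comp tendsto_log_nhdsGT_zero) |>.congr fun t => by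
      simp [sub_eq_add_neg]

theorem inv_eight_mul_le_logCutoff_mul_poleKernel {r t : ℝ} (ht0 : 0 < t) (ht : t ≤ 1 / 2)
    (hr : 1 < r) (hrt : r ≤ 1 + t) :
    (t * (1 - log t))⁻¹ / 8 ≤ logCutoff t * poleKernel r t := by
  have hlog := log_neg ht0 (by linarith)
  calc (t * (1 - log t))⁻¹ / 8 = (2 * (1 - log t))⁻¹ * (4 * t)⁻¹ := by
        field_simp
        ring
    _ ≤ logCutoff t * poleKernel r t :=
      mul_le_mul (inv_two_mul_one_sub_log_le_logCutoff ht0 ht)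
        (inv_four_mul_le_poleKernel ht0 (by linarith) hr hrt) (by positivity) (logCutoff_nonneg t)

theorem tendsto_integral_logCutoff_mul_poleKernel :
    Tendsto (fun r => ∫ t in 0..2 * π, logCutoff t * poleKernel r t) (𝓝[>] 1) atTop := by
  set G : ℝ → ℝ := fun t => -log (1 - log t) / 8
  have hG : ∀ t ∈ Ioc (0 : ℝ) (1 / 2), HasDerivAt G ((t * (1 - log t))⁻¹ / 8) t := fun t ht => by
    simpa using ((hasDerivAt_log_one_sub_log ht.1
      (by linarith [log_neg ht.1 (by linarith [ht.2])])).neg.div_const 8)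
  have hGlim : Tendsto (fun a => G (1 / 2) - G a) (𝓝[>] 0) atTop := by
    refine (tendsto_atTop_add_const_right _ (G (1 / 2))
      (tendsto_log_one_sub_log_nhdsGT_zero.atTop_div_const (r := 8) (by norm_num))).congr
        fun a => ?_
    simp only [G]
    ring
  rw [tendsto_atTop]
  intro M
  obtain ⟨a, hMa, ha0, ha⟩ := ((hGlim.eventually_ge_atTop M).and
    (Ioo_mem_nhdsGT (by norm_num : (0 : ℝ) < 1 / 2))).exists
  filter_upwards [Ioc_mem_nhdsGT (by linarith : (1 : ℝ) < 1 + a)] with r ⟨hr, hra⟩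
  have hcont : Continuous fun t => logCutoff t * poleKernel r t :=
    continuous_logCutoff.mul (continuous_poleKernel hr)
  calc M ≤ G (1 / 2) - G a := hMa
    _ ≤ ∫ t in a..1 / 2, logCutoff t * poleKernel r t :=
      intervalIntegral.sub_le_integral_of_hasDeriv_right_of_le ha.le
        (fun t ht => (hG t ⟨ha0.trans_le ht.1, ht.2⟩).continuousAt.continuousWithinAt)
        (fun t ht => (hG t ⟨ha0.trans ht.1, ht.2.le⟩).hasDerivWithinAt) hcont.integrableOn_Icc
        fun t ht => inv_eight_mul_le_logCutoff_mul_poleKernel (ha0.trans ht.1) ht.2.le hr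
          (by linarith [ht.1])
    _ ≤ ∫ t in 0..2 * π, logCutoff t * poleKernel r t :=
      intervalIntegral.integral_mono_interval ha0.le ha.le (by linarith [pi_gt_three])
        (Eventually.of_forall fun t => logCutoff_mul_poleKernel_nonneg (by linarith) t)
        (hcont.intervalIntegrable _ _)

theorem neg_im_integral_cutoffTest_smul_Gx {r : ℝ} (hr : 1 < r) :
    -(∫ θ in (-π)..π, cutoffTest θ •
        Gx (fun n : ℕ => (-1 : ℂ) ^ n) ((r : ℂ) * Complex.exp (Complex.I * θ))).im
      = ∫ t in 0..2 * π, logCutoff t * poleKernel r t := by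
  have hnorm (θ : ℝ) : ‖(r : ℂ) * Complex.exp (Complex.I * θ)‖ = r := by
    rw [norm_mul, Complex.norm_real, norm_of_nonneg (by linarith), mul_comm Complex.I,
      Complex.norm_exp_ofReal_mul_I, mul_one]
  have hGx (θ : ℝ) : Gx (fun n : ℕ => (-1 : ℂ) ^ n) ((r : ℂ) * Complex.exp (Complex.I * θ))
      = ((r : ℂ) * Complex.exp (Complex.I * θ) + 1)⁻¹ := by
    rw [Gx_geometric (by rwa [hnorm, norm_neg, norm_one]), sub_neg_eq_add]
  have hne (θ : ℝ) : (r : ℂ) * Complex.exp (Complex.I * θ) + 1 ≠ 0 := fun h => by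
    have := congrArg norm (eq_neg_of_add_eq_zero_left h)
    rw [hnorm, norm_neg, norm_one] at this
    linarith
  have hint : IntervalIntegrable
      (fun θ : ℝ => cutoffTest θ • ((r : ℂ) * Complex.exp (Complex.I * θ) + 1)⁻¹) volume (-π) π :=
    (continuous_cutoffTest.smul (Continuous.inv₀ (by fun_prop) hne)).intervalIntegrable _ _
  have him (θ : ℝ) : -Complex.imCLM (cutoffTest θ • ((r : ℂ) * Complex.exp (Complex.I * θ) + 1)⁻¹)
      = logCutoff (π - θ) * poleKernel r (π - θ) := by
    rw [Complex.imCLM_apply, cutoffTest, smul_eq_mul, Complex.im_ofReal_mul, ← mul_neg,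
      neg_im_inv_mul_exp_add_one]
  simp_rw [hGx]
  rw [← Complex.imCLM_apply, ← Complex.imCLM.intervalIntegral_comp_comm hint,
    ← intervalIntegral.integral_neg]
  simp_rw [him]
  rw [intervalIntegral.integral_comp_sub_left (fun t => logCutoff t * poleKernel r t) π,
    sub_self, sub_neg_eq_add, two_mul]

theorem not_isBoundaryFun_of_tendsto_norm_atTop {X : Type*} [NormedAddCommGroup X]
    [NormedSpace ℂ X] [CompleteSpace X] {x : ℕ → X} {ψ : ℝ → ℂ} (hψ : IsC0 ψ)
    (h : Tendsto (fun r : ℝ =>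
      ‖∫ θ in (-π)..π, ψ θ • Gx x ((r : ℂ) * Complex.exp (Complex.I * θ))‖) (𝓝[>] 1) atTop)
    (F : ℂ → X) : ¬ IsBoundaryFun x F :=
  fun hF => not_tendsto_atTop_of_tendsto_nhds (hF ψ hψ).norm h

theorem stmt_9 :
    (∀ n : ℕ, ‖∑ k ∈ Finset.range (n + 1), ((-1 : ℂ)) ^ k‖ ≤ 1) ∧
    (∀ lam : ℂ, 1 < ‖lam‖ →
      Gx (fun n : ℕ => ((-1 : ℂ)) ^ n) lam = (lam + 1)⁻¹) ∧
    (¬ ∃ F : ℂ → ℂ, MemL1loc F ∧ IsBoundaryFun (fun n : ℕ => ((-1 : ℂ)) ^ n) F) ∧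
    ¬ Filter.Tendsto (fun n : ℕ => ((-1 : ℂ)) ^ n) Filter.atTop (nhds 0) := by
  refine ⟨fun n => ?_, fun lam h => ?_, ?_, fun h => by simpa using h.norm⟩
  · rw [neg_one_geom_sum]
    split_ifs <;> simp
  · rw [Gx_geometric (by simpa using h), sub_neg_eq_add]
  · rintro ⟨F, -, hF⟩
    refine not_isBoundaryFun_of_tendsto_norm_atTop isC0_cutoffTest
      (tendsto_atTop_mono' _ ?_ tendsto_integral_logCutoff_mul_poleKernel) F hF
    filter_upwards [self_mem_nhdsWithin] with r hr
    rw [← neg_im_integral_cutoffTest_smul_Gx hr]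
    exact (neg_le_abs _).trans (Complex.abs_im_le_norm _)
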